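/- Let Ω be a finite set with probability weights w : Ω → [0,1], ∑_{ω} w(ω) = 1. Let C : Ω → ℝ^{n×n} satisfy 𝟙ᵀC(ω) = 𝟙ᵀ for every ω, let C̄ := ∑_{ω} w(ω) C(ω), and let v̄ ∈ ℝⁿ satisfy C̄v̄ = v̄ and 𝟙ᵀv̄ = n. Then for any matrix D ∈ ℝ^{n×n} and any y ∈ ℝⁿ, writing ȳ := 𝟙ᵀy/n, the following exact bias–variance decomposition holds: ∑_{ω} w(ω)·‖D(I − v̄𝟙ᵀ/n)C(ω)y‖₂² = ‖D(C̄ − v̄𝟙ᵀ/n)(y − ȳv̄)‖₂² + ∑_{ω} w(ω)·‖D(I − v̄𝟙ᵀ/n)(C(ω) − C̄)y‖₂². -/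

import Mathlib

/-!
Write `K := v̄𝟙ᵀ/n` and `A := D(I - K)`. The vectors `A C(ω) y` are their `w`-mean `A C̄ y` plus the
mean-zero fluctuations `A (C(ω) - C̄) y`, so their weighted second moment is the squared mean plus
the variance: the cross term vanishes. The mean is the bias term: since `C̄` is column-stochastic,
`K C̄ = K`, hence `(I - K) C̄ = C̄ - K`; and `C̄ v̄ = v̄` with `𝟙ᵀv̄ = n` gives `(C̄ - K) v̄ = 0`, so
shifting `y` by a multiple of `v̄` does not change it.
-/

open Matrix

/-- Squared Euclidean norm on `ℝⁿ`. -/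
def e2sq {n : ℕ} (z : Fin n → ℝ) : ℝ := ∑ i, z i ^ 2

lemma e2sq_eq_dotProduct {n : ℕ} (z : Fin n → ℝ) : e2sq z = z ⬝ᵥ z := by
  simp only [e2sq, dotProduct, sq]

lemma e2sq_add {n : ℕ} (a b : Fin n → ℝ) : e2sq (a + b) = e2sq a + 2 * (a ⬝ᵥ b) + e2sq b := by
  simp only [e2sq_eq_dotProduct, add_dotProduct, dotProduct_add, dotProduct_comm b a]
  ring

section BiasVariance

variable {ι : Type*} [Fintype ι] {n : ℕ} {w : ι → ℝ}

lemma sum_mul_e2sq_add_of_sum_smul_eq_zero (hw : ∑ i, w i = 1) (a : Fin n → ℝ)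
    {b : ι → Fin n → ℝ} (hb : ∑ i, w i • b i = 0) :
    ∑ i, w i * e2sq (a + b i) = e2sq a + ∑ i, w i * e2sq (b i) := by
  have hcross : ∑ i, w i * (a ⬝ᵥ b i) = 0 := by
    simpa only [dotProduct_sum, dotProduct_smul, smul_eq_mul, dotProduct_zero] using
      congrArg (a ⬝ᵥ ·) hb
  calc ∑ i, w i * e2sq (a + b i)
      = (∑ i, w i) * e2sq a + 2 * ∑ i, w i * (a ⬝ᵥ b i) + ∑ i, w i * e2sq (b i) := by
        simp only [e2sq_add, Finset.sum_mul, Finset.mul_sum, ← Finset.sum_add_distrib]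
        exact Finset.sum_congr rfl fun i _ => by ring
    _ = e2sq a + ∑ i, w i * e2sq (b i) := by rw [hw, hcross]; ring

lemma sum_smul_sub_sum_smul (hw : ∑ i, w i = 1) {M : Type*} [AddCommGroup M] [Module ℝ M]
    (x : ι → M) : ∑ i, w i • (x i - ∑ j, w j • x j) = 0 := by
  rw [Finset.sum_congr rfl fun i _ => smul_sub (w i) (x i) _, Finset.sum_sub_distrib,
    ← Finset.sum_smul, hw, one_smul, sub_self]

lemma sum_mul_e2sq_mulVec (hw : ∑ i, w i = 1) {m : Type*} [Fintype m]
    (A : ι → Matrix (Fin n) m ℝ) (y : m → ℝ) :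
    ∑ i, w i * e2sq (A i *ᵥ y) =
      e2sq ((∑ i, w i • A i) *ᵥ y) + ∑ i, w i * e2sq ((A i - ∑ j, w j • A j) *ᵥ y) := by
  have hmean : ∑ i, w i • ((A i - ∑ j, w j • A j) *ᵥ y) = 0 := by
    simp only [← smul_mulVec, ← sum_mulVec, sum_smul_sub_sum_smul hw, zero_mulVec]
  rw [← sum_mul_e2sq_add_of_sum_smul_eq_zero hw _ hmean]
  simp only [← add_mulVec, add_sub_cancel]

end BiasVariance

lemma vecMul_sum_smul_of_vecMul_eq {ι : Type*} [Fintype ι] {m : Type*} [Fintype m]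
    {w : ι → ℝ} (hw : ∑ i, w i = 1) {C : ι → Matrix m m ℝ} {u : m → ℝ}
    (hC : ∀ i, u ᵥ* C i = u) : u ᵥ* ∑ i, w i • C i = u := by
  simp only [vecMul_sum, vecMul_smul, hC, ← Finset.sum_smul, hw, one_smul]

lemma of_mul_eq_self_of_vecMul_one {m : Type*} [Fintype m] (f : m → ℝ) {M : Matrix m m ℝ}
    (hM : (fun _ => (1 : ℝ)) ᵥ* M = fun _ => 1) :
    (Matrix.of fun i (_ : m) => f i) * M = Matrix.of fun i _ => f i := by
  ext i j
  have hcol : ∑ k, M k j = 1 := by simpa [vecMul, dotProduct] using congrFun hM j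
  simp only [mul_apply, of_apply, ← Finset.mul_sum, hcol, mul_one]

lemma of_div_mulVec_self {n : ℕ} {v : Fin n → ℝ} (hv : ∑ i, v i = n) :
    (Matrix.of fun i (_ : Fin n) => v i / n) *ᵥ v = v := by
  ext i
  have hn : (n : ℝ) ≠ 0 := by exact_mod_cast i.pos.ne'
  simp only [mulVec, dotProduct, of_apply, ← Finset.mul_sum, hv, div_mul_cancel₀ _ hn]

lemma mul_one_sub_mul_mulVec_eq {n : ℕ} (D Cbar : Matrix (Fin n) (Fin n) ℝ)
    (hCbar : (fun _ => (1 : ℝ)) ᵥ* Cbar = fun _ => 1) {v : Fin n → ℝ}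
    (hv : Cbar *ᵥ v = v) (hvsum : ∑ i, v i = n) (y : Fin n → ℝ) (c : ℝ) :
    (D * (1 - Matrix.of fun i _ => v i / n) * Cbar) *ᵥ y =
      (D * (Cbar - Matrix.of fun i _ => v i / n)) *ᵥ (fun i => y i - c * v i) := by
  set K : Matrix (Fin n) (Fin n) ℝ := Matrix.of fun i _ => v i / n
  have hkernel : (Cbar - K) *ᵥ v = 0 := by
    rw [sub_mulVec, hv, of_div_mulVec_self hvsum, sub_self]
  have hshift : (fun i => y i - c * v i) = y - c • v := rfl
  rw [Matrix.mul_assoc, sub_mul, Matrix.one_mul, of_mul_eq_self_of_vecMul_one _ hCbar, hshift,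
    mulVec_sub, mulVec_smul, ← mulVec_mulVec v D, hkernel, mulVec_zero, smul_zero, sub_zero]

theorem bias_variance_column_stochastic_general {n : ℕ}
    {Ω : Type*} [Fintype Ω]
    (w : Ω → ℝ) (hwsum : ∑ ω, w ω = 1)
    (C : Ω → Matrix (Fin n) (Fin n) ℝ)
    (hC : ∀ ω, Matrix.vecMul (fun _ => (1 : ℝ)) (C ω) = fun _ => (1 : ℝ))
    (Cbar : Matrix (Fin n) (Fin n) ℝ) (hCbar : Cbar = ∑ ω, w ω • C ω)
    (vbar : Fin n → ℝ) (hvbar : Cbar.mulVec vbar = vbar) (hvsum : ∑ i, vbar i = n)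
    (D : Matrix (Fin n) (Fin n) ℝ) (y : Fin n → ℝ)
    (ybar : ℝ) :
    ∑ ω, w ω * e2sq ((D * (1 - Matrix.of fun i _ => vbar i / n) * C ω).mulVec y) =
      e2sq ((D * (Cbar - Matrix.of fun i _ => vbar i / n)).mulVec
        (fun i => y i - ybar * vbar i)) +
      ∑ ω, w ω * e2sq ((D * (1 - Matrix.of fun i _ => vbar i / n) * (C ω - Cbar)).mulVec y) := by
  set A : Matrix (Fin n) (Fin n) ℝ := D * (1 - Matrix.of fun i _ => vbar i / n)
  have hmean : ∑ ω, w ω • (A * C ω) = A * Cbar := by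
    simp only [hCbar, Matrix.mul_sum, Matrix.mul_smul]
  have hCbar_col : (fun _ => (1 : ℝ)) ᵥ* Cbar = fun _ => 1 := by
    rw [hCbar]; exact vecMul_sum_smul_of_vecMul_eq hwsum hC
  rw [sum_mul_e2sq_mulVec hwsum, hmean,
    mul_one_sub_mul_mulVec_eq D Cbar hCbar_col hvbar hvsum y ybar]
  simp only [A, Matrix.mul_sub]

/-- Exact bias–variance decomposition for the column-stochastic random
mixing step: `E‖D(I − v̄𝟙ᵀ/n)C(ω)y‖₂² = ‖D(C̄ − v̄𝟙ᵀ/n)(y − ȳv̄)‖₂²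
+ E‖D(I − v̄𝟙ᵀ/n)(C(ω) − C̄)y‖₂²`. -/
theorem bias_variance_column_stochastic {n : ℕ}
    {Ω : Type*} [Fintype Ω]
    (w : Ω → ℝ) (hw0 : ∀ ω, 0 ≤ w ω) (hw1 : ∀ ω, w ω ≤ 1) (hwsum : ∑ ω, w ω = 1)
    (C : Ω → Matrix (Fin n) (Fin n) ℝ)
    (hC : ∀ ω, Matrix.vecMul (fun _ => (1 : ℝ)) (C ω) = fun _ => (1 : ℝ))
    (Cbar : Matrix (Fin n) (Fin n) ℝ) (hCbar : Cbar = ∑ ω, w ω • C ω)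
    (vbar : Fin n → ℝ) (hvbar : Cbar.mulVec vbar = vbar) (hvsum : ∑ i, vbar i = n)
    (D : Matrix (Fin n) (Fin n) ℝ) (y : Fin n → ℝ)
    (ybar : ℝ) (hybar : ybar = (∑ i, y i) / n) :
    ∑ ω, w ω * e2sq ((D * (1 - Matrix.of fun i _ => vbar i / n) * C ω).mulVec y) =
      e2sq ((D * (Cbar - Matrix.of fun i _ => vbar i / n)).mulVec
        (fun i => y i - ybar * vbar i)) +
      ∑ ω, w ω * e2sq ((D * (1 - Matrix.of fun i _ => vbar i / n) * (C ω - Cbar)).mulVec y) :=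
  bias_variance_column_stochastic_general w hwsum C hC Cbar hCbar vbar hvbar hvsum D y ybar
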